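/- Let u_1, ..., u_s be nonempty finite words that are pairwise such that u_i^ω and u_j^ω have different factor sets, and suppose every power u_i^m is a factor of a right-infinite word w. Let D be such that u_i^D is not a factor of u_j^ω for i ≠ j, and let b = D·|u_1|···|u_s|. Then for every n ≥ 1, the words u_1^{nb/|u_1|}, ..., u_s^{nb/|u_s|} are pairwise not rotations of each other, and every rotation of each of them is a factor of w; hence L_w(nb) ≥ s. -/
import Mathlib


variable {α : Type*}

/-- `u` occurs in the infinite word `w` at position `i`. -/
def FactorAt (w : ℕ → α) (i : ℕ) (u : List α) : Prop :=
  u = (List.range u.length).map fun k => w (i + k)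

/-- The set of (finite) factors of the right-infinite word `w`. -/
def Fac (w : ℕ → α) : Set (List α) := {u | ∃ i, FactorAt w i u}

/-- The Lie complexity: the number of rotation classes of length-`n` words all of
whose members are factors of `w`. -/
noncomputable def LieComplexity (w : ℕ → α) (n : ℕ) : ℕ :=
  Set.ncard {q : Quotient (List.IsRotated.setoid α) |
    ∃ u : List α, Quotient.mk _ u = q ∧ u.length = n ∧ ∀ v, u.IsRotated v → v ∈ Fac w}

/-- `listPow y k` is the `k`-fold concatenation `y^k`. -/
def listPow (y : List α) : ℕ → List α
  | 0 => []
  | n + 1 => y ++ listPow y n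

/-- A nonempty word is primitive if it is not a proper power. -/
def Primitive (y : List α) : Prop :=
  y ≠ [] ∧ ∀ (z : List α) (k : ℕ), y = listPow z k → k = 1

/-- The purely periodic infinite word `v^ω`. -/
def perWord [Inhabited α] (v : List α) (i : ℕ) : α := v.getD (i % v.length) default

/-- `Per(w)`: equivalence classes (identified with their common factor sets) of purely
periodic right-infinite words `v^ω` all of whose factors occur in `w`. -/
def PerSet {α : Type*} [Inhabited α] (w : ℕ → α) : Set (Set (List α)) :=
  {S | ∃ v : List α, v ≠ [] ∧ S = Fac (perWord v) ∧ S ⊆ Fac w}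

theorem listPow_length (y : List α) : ∀ k, (listPow y k).length = k * y.length
  | 0 => by simp [listPow]
  | k+1 => by simp [listPow, listPow_length y k, Nat.succ_mul, Nat.add_comm]

theorem listPow_add (y : List α) (a c : ℕ) :
    listPow y (a + c) = listPow y a ++ listPow y c := by
  induction a with
  | zero => simp [listPow]
  | succ a ih => simp [listPow, Nat.succ_add, ih]

theorem factorAt_iff' {w : ℕ → α} {i : ℕ} {x : List α} :
    FactorAt w i x ↔ ∀ k, k < x.length → x[k]? = some (w (i + k)) := by
  constructor
  · intro h k hk
    conv_lhs => rw [h]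
    simp [List.getElem?_map, List.getElem?_range, hk]
  · intro h
    apply List.ext_getElem?
    intro k
    by_cases hk : k < x.length
    · rw [h k hk]
      simp [List.getElem?_map, List.getElem?_range, hk]
    · rw [List.getElem?_eq_none (by omega), List.getElem?_eq_none (by simp; omega)]

theorem Fac.infix {w : ℕ → α} {x y : List α} (hxy : y <:+: x) (hx : x ∈ Fac w) : y ∈ Fac w := by
  obtain ⟨i, hi⟩ := hx
  obtain ⟨p, q, rfl⟩ := hxy
  refine ⟨i + p.length, ?_⟩
  rw [factorAt_iff'] at hi ⊢
  intro k hk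
  have h1 : p.length + k < (p ++ y ++ q).length := by simp; omega
  have h2 := hi (p.length + k) h1
  rw [List.append_assoc, List.getElem?_append_right (by omega)] at h2
  simpa [List.getElem?_append_left hk, Nat.add_assoc] using h2

theorem listPow_getElem? (y : List α) :
    ∀ (m k : ℕ), k < m * y.length → (listPow y m)[k]? = y[k % y.length]?
  | 0, k, h => by omega
  | m+1, k, h => by
    show (y ++ listPow y m)[k]? = _
    by_cases hk : k < y.length
    · rw [List.getElem?_append_left hk, Nat.mod_eq_of_lt hk]
    · push_neg at hk
      rw [List.getElem?_append_right (by simpa using hk),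
        listPow_getElem? y m (k - y.length) (by rw [Nat.succ_mul] at h; omega),
        Nat.mod_eq_sub_mod hk]

theorem listPow_mem_fac_perWord [Inhabited α] (y : List α) (hy : y ≠ []) (m : ℕ) :
    listPow y m ∈ Fac (perWord y) := by
  refine ⟨0, ?_⟩
  rw [factorAt_iff']
  intro k hk
  rw [listPow_length] at hk
  have hmod : k % y.length < y.length := Nat.mod_lt _ (List.length_pos_iff.mpr hy)
  rw [listPow_getElem? y m k hk, List.getElem?_eq_getElem hmod]
  simp [perWord, List.getD, List.getElem?_eq_getElem hmod]

theorem isRotated_infix {x v : List α} (h : x.IsRotated v) : v <:+: x ++ x := by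
  obtain ⟨n, rfl⟩ := h
  rw [List.rotate_eq_drop_append_take_mod]
  refine ⟨x.take (n % x.length), x.drop (n % x.length), ?_⟩
  simp only [← List.append_assoc]
  rw [List.take_append_drop, List.append_assoc, List.take_append_drop]

theorem lie_ge_of_inequivalent_periods [Fintype α] [Inhabited α] (w : ℕ → α) (s : ℕ)
    (u : Fin s → List α) (hne : ∀ i, u i ≠ [])
    (hdist : ∀ i j : Fin s, i ≠ j → Fac (perWord (u i)) ≠ Fac (perWord (u j)))
    (hpow : ∀ (i : Fin s) (m : ℕ), listPow (u i) m ∈ Fac w)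
    (D : ℕ) (hD : ∀ i j : Fin s, i ≠ j → listPow (u i) D ∉ Fac (perWord (u j)))
    (b : ℕ) (hb : b = D * ∏ i : Fin s, (u i).length) :
    ∀ n : ℕ, 1 ≤ n →
      (∀ i j : Fin s, i ≠ j →
          ¬ (listPow (u i) (n * b / (u i).length)).IsRotated
              (listPow (u j) (n * b / (u j).length))) ∧
      (∀ (i : Fin s) (v : List α),
          (listPow (u i) (n * b / (u i).length)).IsRotated v → v ∈ Fac w) ∧
      s ≤ LieComplexity w (n * b) := by
  intro n hn
  have hlen : ∀ i, 0 < (u i).length := fun i => List.length_pos_iff.mpr (hne i)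
  have hdvdP : ∀ i, (u i).length ∣ ∏ j : Fin s, (u j).length := fun i =>
    Finset.dvd_prod_of_mem _ (Finset.mem_univ i)
  have hPpos : 0 < ∏ j : Fin s, (u j).length := Finset.prod_pos fun i _ => hlen i
  have hdvdb : ∀ i, (u i).length ∣ n * b := by
    intro i
    refine Dvd.dvd.mul_left ?_ n
    rw [hb]
    exact Dvd.dvd.mul_left (hdvdP i) D
  have hmlen : ∀ i, (listPow (u i) (n * b / (u i).length)).length = n * b := fun i => by
    rw [listPow_length, Nat.div_mul_cancel (hdvdb i)]
  have hDm : ∀ i, D ≤ n * b / (u i).length := by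
    intro i
    rw [Nat.le_div_iff_mul_le (hlen i)]
    calc D * (u i).length ≤ D * ∏ j : Fin s, (u j).length :=
          Nat.mul_le_mul_left D (Nat.le_of_dvd hPpos (hdvdP i))
      _ = b := hb.symm
      _ ≤ n * b := Nat.le_mul_of_pos_left b hn
  have part1 : ∀ i j : Fin s, i ≠ j →
      ¬ (listPow (u i) (n * b / (u i).length)).IsRotated
          (listPow (u j) (n * b / (u j).length)) := by
    intro i j hij hrot
    apply hD i j hij
    have h1 : listPow (u i) (n * b / (u i).length) ∈ Fac (perWord (u j)) := by
      apply Fac.infix (isRotated_infix hrot.symm)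
      rw [← listPow_add]
      exact listPow_mem_fac_perWord (u j) (hne j) _
    apply Fac.infix _ h1
    refine ⟨[], listPow (u i) (n * b / (u i).length - D), ?_⟩
    simp [← listPow_add, Nat.add_sub_cancel' (hDm i)]
  have part2 : ∀ (i : Fin s) (v : List α),
      (listPow (u i) (n * b / (u i).length)).IsRotated v → v ∈ Fac w := by
    intro i v hrot
    apply Fac.infix (isRotated_infix hrot)
    rw [← listPow_add]
    exact hpow i _
  refine ⟨part1, part2, ?_⟩
  have hinj : Function.Injective (fun i : Fin s =>
      Quotient.mk (List.IsRotated.setoid α) (listPow (u i) (n * b / (u i).length))) := by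
    intro i j h
    by_contra hij
    exact part1 i j hij (Quotient.exact h)
  have hsub : Set.range (fun i : Fin s =>
      Quotient.mk (List.IsRotated.setoid α) (listPow (u i) (n * b / (u i).length))) ⊆
      {q : Quotient (List.IsRotated.setoid α) |
        ∃ x : List α, Quotient.mk _ x = q ∧ x.length = n * b ∧
          ∀ v, x.IsRotated v → v ∈ Fac w} := by
    rintro q ⟨i, rfl⟩
    exact ⟨listPow (u i) (n * b / (u i).length), rfl, hmlen i, part2 i⟩
  have hfin : ({q : Quotient (List.IsRotated.setoid α) |
      ∃ x : List α, Quotient.mk _ x = q ∧ x.length = n * b ∧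
        ∀ v, x.IsRotated v → v ∈ Fac w}).Finite := by
    apply Set.Finite.subset
      (Set.Finite.image (Quotient.mk _) (List.finite_length_eq α (n * b)))
    rintro q ⟨x, rfl, hx, -⟩
    exact ⟨x, hx, rfl⟩
  unfold LieComplexity
  calc s = (Set.range (fun i : Fin s =>
        Quotient.mk (List.IsRotated.setoid α) (listPow (u i) (n * b / (u i).length)))).ncard := by
        rw [← Set.image_univ, Set.ncard_image_of_injective _ hinj, Set.ncard_univ,
          Nat.card_eq_fintype_card, Fintype.card_fin]
    _ ≤ _ := Set.ncard_le_ncard hsub hfin
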